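/- arXiv:2605.17484 — 2 statements merged into one kernel-verified Lean document; each statement's English description precedes it below -/
import Mathlib

section
/- Location of the first edge singular exponent: let a ∈ (0, π) and let c > 1. Then (i) for every t ∈ (0, 1/2] one has sin(t(π − a)) < c · sin(tπ), so the equation sin(μ(π − a)) = c · sin(μπ) has no solution μ ∈ (0, 1/2]; and (ii) there exists μ ∈ (1/2, 1) with sin(μ(π − a)) = c · sin(μπ). In particular, the smallest positive solution μ₁ of this equation in (0,1) satisfies 1/2 < μ₁ < 1. -/
open Real Set

/-!
On `(0, 1/2]` both arguments `t(π - a) < tπ` lie in `[0, π/2]`, where `sin` is strictly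
increasing, and `sin (tπ) > 0`, so `sin (t(π - a)) < sin (tπ) ≤ c sin (tπ)`. On `[1/2, 1]` the
difference `sin (μ(π - a)) - c sin (μπ)` is `≤ 1 - c < 0` at `μ = 1/2` and equals `sin a > 0` at
`μ = 1`, so it vanishes somewhere in between. Hence the least positive root lies in `(1/2, 1)`.
-/

lemma sin_lt_mul_sin_of_lt {x y c : ℝ} (hx : -(π / 2) ≤ x) (hxy : x < y) (hy₀ : 0 < y)
    (hy : y ≤ π / 2) (hc : 1 ≤ c) : sin x < c * sin y := by
  have hsin_pos : 0 < sin y := sin_pos_of_pos_of_lt_pi hy₀ (by linarith [pi_pos])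
  calc sin x < sin y := strictMonoOn_sin ⟨hx, by linarith⟩ ⟨by linarith, hy⟩ hxy
    _ ≤ c * sin y := le_mul_of_one_le_left hsin_pos.le hc

lemma sin_mul_pi_sub_lt_mul_sin_mul_pi {a c t : ℝ} (ha : a ∈ Ioo 0 π) (hc : 1 ≤ c)
    (ht : t ∈ Ioc (0 : ℝ) (1 / 2)) : sin (t * (π - a)) < c * sin (t * π) := by
  obtain ⟨ha₀, haπ⟩ := ha
  obtain ⟨ht₀, ht⟩ := ht
  have hπ := pi_pos
  apply sin_lt_mul_sin_of_lt _ _ (by positivity) _ hc <;> nlinarith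

lemma exists_sin_mul_pi_sub_eq_mul_sin_mul_pi {a c : ℝ} (ha : a ∈ Ioo 0 π) (hc : 1 < c) :
    ∃ μ ∈ Ioo (1 / 2 : ℝ) 1, sin (μ * (π - a)) = c * sin (μ * π) := by
  set f : ℝ → ℝ := fun μ ↦ sin (μ * (π - a)) - c * sin (μ * π)
  have hf : ContinuousOn f (Icc (1 / 2) 1) := by fun_prop
  have hf_half : f (1 / 2) < 0 := by
    have : sin (1 / 2 * π) = 1 := by rw [one_div_mul_eq_div, sin_pi_div_two]
    simp only [f, this]
    linarith [sin_le_one (1 / 2 * (π - a))]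
  have hf_one : 0 < f 1 := by
    simpa [f, sin_pi_sub] using sin_pos_of_pos_of_lt_pi ha.1 ha.2
  obtain ⟨μ, hμ, hfμ⟩ := intermediate_value_Ioo (by norm_num) hf ⟨hf_half, hf_one⟩
  exact ⟨μ, hμ, sub_eq_zero.mp hfμ⟩

/-- Location of the first edge singular exponent: for an opening angle `a ∈ (0, π)` and
contrast ratio `c > 1`, the equation `sin (μ(π−a)) = c · sin (μπ)` has no solution in
`(0, 1/2]`, has a solution in `(1/2, 1)`, and its least positive solution lies in `(1/2, 1)`. -/
theorem first_edge_singular_exponent (a c : ℝ) (ha : a ∈ Set.Ioo 0 π) (hc : 1 < c) :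
    (∀ t ∈ Set.Ioc (0 : ℝ) (1 / 2),
        Real.sin (t * (π - a)) < c * Real.sin (t * π)) ∧
    (∃ μ ∈ Set.Ioo (1 / 2 : ℝ) 1,
        Real.sin (μ * (π - a)) = c * Real.sin (μ * π)) ∧
    (∀ μ₁ : ℝ,
        IsLeast {μ : ℝ | 0 < μ ∧ Real.sin (μ * (π - a)) = c * Real.sin (μ * π)} μ₁ →
        μ₁ ∈ Set.Ioo (1 / 2 : ℝ) 1) := by
  have no_root_le_half := fun t ↦ sin_mul_pi_sub_lt_mul_sin_mul_pi (t := t) ha hc.le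
  obtain ⟨μ, hμ, hμ_root⟩ := exists_sin_mul_pi_sub_eq_mul_sin_mul_pi ha hc
  refine ⟨no_root_le_half, ⟨μ, hμ, hμ_root⟩, ?_⟩
  rintro μ₁ ⟨⟨hμ₁_pos, hμ₁_root⟩, hμ₁_least⟩
  have hμ₁_le : μ₁ ≤ μ := hμ₁_least ⟨by linarith [hμ.1], hμ_root⟩
  refine ⟨not_le.mp fun hμ₁_half ↦ ?_, hμ₁_le.trans_lt hμ.2⟩
  exact (no_root_le_half μ₁ ⟨hμ₁_pos, hμ₁_half⟩).ne hμ₁_root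
end

section
/- Differentiation of the smoothing kernel operator in the scale variable: let φ : ℝ → ℝ be a Schwartz function, let g : ℝ → ℝ be bounded and measurable, and let z ∈ ℝ. Then the function r ↦ K_r g(z) = ∫_ℝ (1/r) φ(t/r) g(z − t) dt is differentiable on (0, ∞), and for every r > 0, d/dr K_r g(z) = −(1/r) ∫_ℝ (1/r) ψ(t/r) g(z − t) dt, where ψ(x) = φ(x) + x φ'(x) is the derivative of x ↦ x φ(x). -/
open MeasureTheory SchwartzMap

/-!
Differentiate under the integral sign. The `ρ`-derivative of `ρ⁻¹ φ(t/ρ)` is `-ρ⁻² ψ(t/ρ)`,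
and `ψ = (x φ)'` is again a Schwartz function, so `|ψ x| ≤ M / (1 + x²)`. Since this envelope
decreases in `|x|`, for `ρ ∈ (r/2, 2r)` the derivatives are dominated uniformly by the integrable
function `4 r⁻² M / (1 + (t / 2r)²)`, and multiplying by the bounded `g (z - ·)` preserves this.
-/

theorem SchwartzMap.exists_abs_le_mul_inv_one_add_sq (f : 𝓢(ℝ, ℝ)) :
    ∃ M, ∀ x, |f x| ≤ M * (1 + x ^ 2)⁻¹ := by
  obtain ⟨A₀, -, hA₀⟩ := f.decay 0 0
  obtain ⟨A₂, -, hA₂⟩ := f.decay 2 0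
  simp only [norm_iteratedFDeriv_zero, Real.norm_eq_abs, pow_zero, one_mul, sq_abs] at hA₀ hA₂
  refine ⟨A₀ + A₂, fun x => ?_⟩
  rw [← div_eq_mul_inv, le_div_iff₀ (by positivity)]
  linarith [hA₀ x, hA₂ x]

theorem SchwartzMap.exists_schwartz_eq_add_mul_deriv (φ : 𝓢(ℝ, ℝ)) :
    ∃ ψ : 𝓢(ℝ, ℝ), ∀ x, ψ x = φ x + x * deriv φ x := by
  refine ⟨derivCLM ℝ ℝ (smulLeftCLM ℝ (fun x : ℝ => x) φ), fun x => ?_⟩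
  rw [derivCLM_apply, smulLeftCLM_apply Function.HasTemperateGrowth.id']
  simp only [smul_eq_mul]
  rw [deriv_fun_mul differentiableAt_fun_id φ.differentiableAt, deriv_id'', one_mul]

theorem abs_comp_div_le_of_abs_le_mul_inv_one_add_sq {f : ℝ → ℝ} {M : ℝ}
    (hf : ∀ x, |f x| ≤ M * (1 + x ^ 2)⁻¹) {ρ R : ℝ} (hρ : 0 < ρ) (hρR : ρ ≤ R) (t : ℝ) :
    |f (t / ρ)| ≤ M * (1 + (t / R) ^ 2)⁻¹ := by
  have hM : 0 ≤ M := nonneg_of_mul_nonneg_left ((abs_nonneg _).trans (hf 0)) (by positivity)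
  have hsq : (t / R) ^ 2 ≤ (t / ρ) ^ 2 := by
    rw [div_pow, div_pow]
    exact div_le_div_of_nonneg_left (sq_nonneg t) (by positivity) (by gcongr)
  exact (hf _).trans (by gcongr)

theorem hasDerivAt_one_div_mul_comp_div {φ : ℝ → ℝ} {t ρ : ℝ} (hρ : ρ ≠ 0)
    (hφ : DifferentiableAt ℝ φ (t / ρ)) :
    HasDerivAt (fun ρ => 1 / ρ * φ (t / ρ))
      (-(1 / ρ ^ 2) * (φ (t / ρ) + t / ρ * deriv φ (t / ρ))) ρ := by
  have hinv : HasDerivAt (fun ρ : ℝ => 1 / ρ) (-(1 / ρ ^ 2)) ρ := by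
    simpa [one_div] using hasDerivAt_inv hρ
  have hdiv : HasDerivAt (fun ρ : ℝ => t / ρ) (t * -(1 / ρ ^ 2)) ρ := by
    simpa only [mul_one_div] using hinv.const_mul t
  refine (hinv.mul (hφ.hasDerivAt.comp ρ hdiv)).congr_deriv ?_
  rw [Function.comp_apply]
  field_simp
  ring

theorem hasDerivAt_integral_mul_of_bounded {α : Type*} [MeasurableSpace α] {μ : Measure α}
    {k k' : ℝ → α → ℝ} {h bound : α → ℝ} {s : Set ℝ} {r C : ℝ} (hs : s ∈ nhds r)
    (hk_meas : ∀ᶠ ρ in nhds r, AEStronglyMeasurable (k ρ) μ) (hk_int : Integrable (k r) μ)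
    (hk'_meas : AEStronglyMeasurable (k' r) μ) (hk'_le : ∀ᵐ a ∂μ, ∀ ρ ∈ s, |k' ρ a| ≤ bound a)
    (hbound : Integrable bound μ) (hk : ∀ᵐ a ∂μ, ∀ ρ ∈ s, HasDerivAt (k · a) (k' ρ a) ρ)
    (hh : AEStronglyMeasurable h μ) (hC : ∀ᵐ a ∂μ, |h a| ≤ C) :
    HasDerivAt (fun ρ => ∫ a, k ρ a * h a ∂μ) (∫ a, k' r a * h a ∂μ) r := by
  refine (hasDerivAt_integral_of_dominated_loc_of_deriv_le (F := fun ρ a => k ρ a * h a)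
    (F' := fun ρ a => k' ρ a * h a) (bound := fun a => bound a * C) hs
    (hk_meas.mono fun ρ hρ => hρ.mul hh) (hk_int.mul_bdd hh hC) (hk'_meas.mul hh) ?_
    (hbound.mul_const C) ?_).2
  · filter_upwards [hk'_le, hC] with a ha hCa ρ hρ
    rw [Real.norm_eq_abs, abs_mul]
    exact mul_le_mul (ha ρ hρ) hCa (abs_nonneg _) ((abs_nonneg _).trans (ha ρ hρ))
  · filter_upwards [hk] with a ha ρ hρ
    exact (ha ρ hρ).mul_const (h a)

theorem hasDerivAt_integral_dilation_mul {φ h : ℝ → ℝ} {M C r : ℝ} (hφ : Differentiable ℝ φ)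
    (hφ_int : Integrable φ) (hψ : ∀ x, |φ x + x * deriv φ x| ≤ M * (1 + x ^ 2)⁻¹)
    (hh : AEStronglyMeasurable h) (hC : ∀ t, |h t| ≤ C) (hr : 0 < r) :
    HasDerivAt (fun ρ => ∫ t, 1 / ρ * φ (t / ρ) * h t)
      (∫ t, -(1 / r ^ 2) * (φ (t / r) + t / r * deriv φ (t / r)) * h t) r := by
  have hs : Set.Ioo (r / 2) (2 * r) ∈ nhds r := Ioo_mem_nhds (by linarith) (by linarith)
  have hk'_le : ∀ t, ∀ ρ ∈ Set.Ioo (r / 2) (2 * r),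
      |-(1 / ρ ^ 2) * (φ (t / ρ) + t / ρ * deriv φ (t / ρ))|
        ≤ 4 / r ^ 2 * (M * (1 + (t / (2 * r)) ^ 2)⁻¹) := by
    rintro t ρ ⟨hρ_lo, hρ_hi⟩
    have hρ : 0 < ρ := by linarith
    have hinv : 1 / ρ ^ 2 ≤ 4 / r ^ 2 := by
      rw [div_le_div_iff₀ (by positivity) (by positivity)]
      nlinarith
    rw [abs_mul, abs_neg, abs_of_pos (by positivity)]
    exact mul_le_mul hinv (abs_comp_div_le_of_abs_le_mul_inv_one_add_sq
      (f := fun x => φ x + x * deriv φ x) hψ hρ hρ_hi.le t) (abs_nonneg _) (by positivity)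
  have hφ_cont := hφ.continuous
  have hφ'_meas := measurable_deriv φ
  refine hasDerivAt_integral_mul_of_bounded hs
    (Filter.Eventually.of_forall fun ρ => (by fun_prop : Continuous _).aestronglyMeasurable)
    ((hφ_int.comp_div hr.ne').const_mul (1 / r))
    (by fun_prop : Measurable _).aestronglyMeasurable
    (Filter.Eventually.of_forall hk'_le)
    (((integrable_inv_one_add_sq.comp_div (by positivity)).const_mul M).const_mul _)
    (Filter.Eventually.of_forall fun t ρ hρ =>
      hasDerivAt_one_div_mul_comp_div (by linarith [hρ.1]) (hφ _))
    hh (Filter.Eventually.of_forall hC)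

/-- Differentiation of the smoothing kernel operator in the scale variable: for a Schwartz
kernel `φ` and a bounded measurable `g`, `r ↦ K_r g(z)` is differentiable on `(0, ∞)` with
`d/dr K_r g(z) = −(1/r) ∫ (1/r) ψ(t/r) g(z − t) dt`, where `ψ(x) = φ(x) + x φ'(x)`. -/
theorem smoothing_kernel_deriv_r (φ : SchwartzMap ℝ ℝ) (g : ℝ → ℝ)
    (hgm : Measurable g) (C : ℝ) (hgb : ∀ x : ℝ, |g x| ≤ C)
    (z : ℝ) (r : ℝ) (hr : 0 < r) :
    HasDerivAt (fun ρ : ℝ => ∫ t : ℝ, (1 / ρ) * φ (t / ρ) * g (z - t))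
      (-(1 / r) * ∫ t : ℝ, (1 / r) * (φ (t / r) + (t / r) * deriv (⇑φ) (t / r)) * g (z - t))
      r := by
  obtain ⟨ψ, hψ⟩ := φ.exists_schwartz_eq_add_mul_deriv
  obtain ⟨M, hM⟩ := ψ.exists_abs_le_mul_inv_one_add_sq
  convert hasDerivAt_integral_dilation_mul φ.differentiable φ.integrable (fun x => hψ x ▸ hM x)
    (by fun_prop : Measurable fun t => g (z - t)).aestronglyMeasurable (fun t => hgb (z - t)) hr
    using 1
  rw [← integral_const_mul]
  congr 1 with t
  ring
end
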